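/- Let σ > 0 and β > 0, and let μ be the Gaussian measure on ℝ with mean 0 and variance σ², whose density is φ_σ(w) = exp(−w²/(2σ²))/(σ√(2π)). Then φ_σ(−β) ≤ Ĉ · μ((−∞, −β]), where Ĉ := ((√(4 + β²/σ²) + β/σ)/(√(2 + β²/σ²) + β/σ)) · (β/σ² + (β/√(2 + β²/σ²) + σ)/(σ²·√(2 + β²/σ²) + βσ)). (The sharper bound Ĉ_{2,1} of Remark 4.6 on the local Lipschitz constant of the Gaussian CDF.) -/

import Mathlib

/-!
Birnbaum's bound on the Gaussian Mills ratio: with `s = √(x² + 4v)`, the gap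
`P(X ≤ -x) - 2vφ(x)/(x + s)` has derivative `2vφ(x)(x/s - 1)/(x + s)² ≤ 0` (using `s² = 2x(x + s) + 4v`
and `φ' = -xφ/v`) and tends to `0` at `+∞`, so it is nonnegative. Hence
`φ(β) ≤ (β + √(β² + 4σ²))/(2σ²) · P(X ≤ -β)`, and after clearing denominators the remaining comparison
with `Ĉ` reduces to `β² ≤ β √(β² + 2σ²)`.
-/

open MeasureTheory ProbabilityTheory Set Filter Topology NNReal

theorem hasDerivAt_integral_Iic {E : Type*} [NormedAddCommGroup E] [NormedSpace ℝ E]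
    [CompleteSpace E] {f : ℝ → E} (hf : Continuous f) (hfi : Integrable f) (a : ℝ) :
    HasDerivAt (fun y ↦ ∫ x in Iic y, f x) (f a) a := by
  have hsplit : (fun y ↦ ∫ x in Iic y, f x) = fun y ↦ (∫ x in Iic 0, f x) + ∫ x in (0)..y, f x := by
    ext y
    rw [← intervalIntegral.integral_Iic_sub_Iic hfi.integrableOn hfi.integrableOn,
      add_sub_cancel]
  rw [hsplit]
  exact (intervalIntegral.integral_hasDerivAt_right hfi.intervalIntegrable
    hf.stronglyMeasurable.stronglyMeasurableAtFilter hf.continuousAt).const_add _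

theorem continuous_gaussianPDFReal (μ : ℝ) (v : ℝ≥0) : Continuous (gaussianPDFReal μ v) := by
  unfold gaussianPDFReal; fun_prop

theorem hasDerivAt_cdf_gaussianReal (μ : ℝ) {v : ℝ≥0} (hv : v ≠ 0) (x : ℝ) :
    HasDerivAt (cdf (gaussianReal μ v)) (gaussianPDFReal μ v x) x := by
  have hcdf : cdf (gaussianReal μ v) = fun y ↦ ∫ t in Iic y, gaussianPDFReal μ v t := by
    ext y
    rw [cdf_eq_real, measureReal_def, gaussianReal_apply_eq_integral μ hv,
      ENNReal.toReal_ofReal (integral_nonneg fun t ↦ gaussianPDFReal_nonneg μ v t)]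
  rw [hcdf]
  exact hasDerivAt_integral_Iic (continuous_gaussianPDFReal μ v) (integrable_gaussianPDFReal μ v) x

theorem hasDerivAt_gaussianPDFReal (μ : ℝ) (v : ℝ≥0) (x : ℝ) :
    HasDerivAt (gaussianPDFReal μ v) (-((x - μ) / v) * gaussianPDFReal μ v x) x := by
  have hexponent : HasDerivAt (fun y ↦ -(y - μ) ^ 2 / (2 * v)) (-((x - μ) / v)) x :=
    ((((hasDerivAt_id' x).sub_const μ).fun_pow 2).fun_neg.div_const (2 * (v : ℝ))).congr_deriv
      (by ring)
  rw [gaussianPDFReal_def]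
  exact (hexponent.exp.const_mul (√(2 * Real.pi * v))⁻¹).congr_deriv (by ring)

theorem tendsto_gaussianPDFReal_atTop (μ : ℝ) {v : ℝ≥0} (hv : v ≠ 0) :
    Tendsto (gaussianPDFReal μ v) atTop (𝓝 0) := by
  have hv' : (0 : ℝ) < 2 * v := by positivity
  have hexp : Tendsto (fun x ↦ -(x - μ) ^ 2 / (2 * v)) atTop atBot := by
    simp_rw [neg_div]
    exact tendsto_neg_atTop_atBot.comp (((tendsto_pow_atTop two_ne_zero).comp
      (tendsto_atTop_add_const_right _ (-μ) tendsto_id)).atTop_div_const hv')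
  rw [gaussianPDFReal_def]
  simpa only [mul_zero, Function.comp_def] using
    (Real.tendsto_exp_atBot.comp hexp).const_mul (√(2 * Real.pi * v))⁻¹

theorem gaussianPDFReal_zero_neg (v : ℝ≥0) (x : ℝ) :
    gaussianPDFReal 0 v (-x) = gaussianPDFReal 0 v x := by
  simp [gaussianPDFReal]

theorem abs_lt_sqrt_sq_add (x : ℝ) {c : ℝ} (hc : 0 < c) : |x| < √(x ^ 2 + c) := by
  rw [Real.lt_sqrt (abs_nonneg x), sq_abs]
  linarith

noncomputable def birnbaumGap (v : ℝ≥0) (x : ℝ) : ℝ :=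
  cdf (gaussianReal 0 v) (-x) - 2 * v * gaussianPDFReal 0 v x / (x + √(x ^ 2 + 4 * v))

theorem hasDerivAt_birnbaumGap {v : ℝ≥0} (hv : v ≠ 0) (x : ℝ) :
    HasDerivAt (birnbaumGap v)
      (2 * v * gaussianPDFReal 0 v x * (x / √(x ^ 2 + 4 * v) - 1) / (x + √(x ^ 2 + 4 * v)) ^ 2)
      x := by
  set s := √(x ^ 2 + 4 * v) with hs_def
  have hs_sq : s ^ 2 = x ^ 2 + 4 * v := Real.sq_sqrt (by positivity)
  have hxs : |x| < s := abs_lt_sqrt_sq_add x (by positivity)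
  have hs_pos : 0 < s := (abs_nonneg x).trans_lt hxs
  have hden_pos : 0 < x + s := by linarith [neg_abs_le x]
  have hsqrt : HasDerivAt (fun y ↦ √(y ^ 2 + 4 * v)) (x / s) x :=
    (((hasDerivAt_id' x).fun_pow 2).add_const (4 * (v : ℝ))).sqrt (by positivity)
      |>.congr_deriv (by field_simp; ring)
  have htail : HasDerivAt (fun y ↦ cdf (gaussianReal 0 v) (-y)) (-gaussianPDFReal 0 v x) x := by
    have := (hasDerivAt_cdf_gaussianReal 0 hv (-x)).comp x (hasDerivAt_neg x)
    rwa [gaussianPDFReal_zero_neg, mul_neg_one] at this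
  have hfrac := ((hasDerivAt_gaussianPDFReal 0 v x).const_mul (2 * (v : ℝ))).div
    ((hasDerivAt_id' x).fun_add hsqrt) hden_pos.ne'
  rw [← hs_def] at hfrac
  refine (htail.sub hfrac).congr_deriv ?_
  field_simp
  linear_combination (-(gaussianPDFReal 0 v x) * s) * hs_sq

theorem antitone_birnbaumGap {v : ℝ≥0} (hv : v ≠ 0) : Antitone (birnbaumGap v) := by
  refine antitone_of_deriv_nonpos (fun x ↦ (hasDerivAt_birnbaumGap hv x).differentiableAt)
    fun x ↦ ?_
  rw [(hasDerivAt_birnbaumGap hv x).deriv]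
  have hxs : |x| < √(x ^ 2 + 4 * v) := abs_lt_sqrt_sq_add x (by positivity)
  have hratio : x / √(x ^ 2 + 4 * v) ≤ 1 :=
    div_le_one_of_le₀ ((le_abs_self x).trans hxs.le) (Real.sqrt_nonneg _)
  have hφ := gaussianPDFReal_nonneg 0 v x
  exact div_nonpos_of_nonpos_of_nonneg
    (mul_nonpos_of_nonneg_of_nonpos (by positivity) (by linarith)) (sq_nonneg _)

theorem tendsto_birnbaumGap_atTop {v : ℝ≥0} (hv : v ≠ 0) :
    Tendsto (birnbaumGap v) atTop (𝓝 0) := by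
  have htail : Tendsto (fun x ↦ cdf (gaussianReal 0 v) (-x)) atTop (𝓝 0) :=
    (tendsto_cdf_atBot _).comp tendsto_neg_atTop_atBot
  have hden : Tendsto (fun x : ℝ ↦ x + √(x ^ 2 + 4 * v)) atTop atTop :=
    tendsto_atTop_add_right_of_le _ 0 tendsto_id fun _ ↦ Real.sqrt_nonneg _
  have hfrac := ((tendsto_gaussianPDFReal_atTop 0 hv).const_mul (2 * (v : ℝ))).div_atTop hden
  rw [← sub_zero (0 : ℝ)]
  exact htail.sub hfrac

theorem two_mul_gaussianPDFReal_le_mul_cdf_neg {v : ℝ≥0} (hv : v ≠ 0) (x : ℝ) :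
    2 * v * gaussianPDFReal 0 v x ≤ (x + √(x ^ 2 + 4 * v)) * cdf (gaussianReal 0 v) (-x) := by
  have hgap : 0 ≤ birnbaumGap v x :=
    (antitone_birnbaumGap hv).le_of_tendsto (tendsto_birnbaumGap_atTop hv) x
  have hden : 0 < x + √(x ^ 2 + 4 * v) := by
    linarith [neg_abs_le x, abs_lt_sqrt_sq_add x (c := 4 * v) (by positivity)]
  rw [birnbaumGap, sub_nonneg, div_le_iff₀ hden] at hgap
  linarith

theorem sqrt_add_div_sq (c x : ℝ) {σ : ℝ} (hσ : 0 < σ) :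
    √(c + x ^ 2 / σ ^ 2) = √(x ^ 2 + c * σ ^ 2) / σ := by
  rw [show c + x ^ 2 / σ ^ 2 = (x ^ 2 + c * σ ^ 2) / σ ^ 2 by field_simp; ring,
    Real.sqrt_div' _ (sq_nonneg σ), Real.sqrt_sq hσ.le]

theorem add_sqrt_le_two_mul_sq_mul {σ β : ℝ} (hσ : 0 < σ) (hβ : 0 ≤ β) :
    β + √(β ^ 2 + 4 * σ ^ 2) ≤ 2 * σ ^ 2 *
      (((√(4 + β ^ 2 / σ ^ 2) + β / σ) / (√(2 + β ^ 2 / σ ^ 2) + β / σ)) *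
        (β / σ ^ 2 + (β / √(2 + β ^ 2 / σ ^ 2) + σ) / (σ ^ 2 * √(2 + β ^ 2 / σ ^ 2) + β * σ))) := by
  rw [sqrt_add_div_sq 4 β hσ, sqrt_add_div_sq 2 β hσ]
  set A := √(β ^ 2 + 4 * σ ^ 2)
  set B := √(β ^ 2 + 2 * σ ^ 2)
  have hA : 0 ≤ A := Real.sqrt_nonneg _
  have hB2 : B ^ 2 = β ^ 2 + 2 * σ ^ 2 := Real.sq_sqrt (by positivity)
  have hB : 0 < B := Real.sqrt_pos.2 (by positivity)
  have hβB : β ≤ B := Real.le_sqrt_of_sq_le (by linarith [sq_nonneg σ])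
  have hratio : (A / σ + β / σ) / (B / σ + β / σ) = (A + β) / (B + β) := by
    rw [← add_div, ← add_div, div_div_div_cancel_right₀ hσ.ne']
  have hcorr : (β / (B / σ) + σ) / (σ ^ 2 * (B / σ) + β * σ) = 1 / B := by
    field_simp
    ring
  rw [hratio, hcorr]
  field_simp
  nlinarith [mul_nonneg (add_nonneg hA hβ) (mul_nonneg hβ (sub_nonneg.2 hβB))]

theorem gaussianPDFReal_zero_of_coe_eq_sq {σ : ℝ} (hσ : 0 < σ) {v : ℝ≥0} (hv : (v : ℝ) = σ ^ 2)
    (x : ℝ) :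
    gaussianPDFReal 0 v x = Real.exp (-x ^ 2 / (2 * σ ^ 2)) / (σ * √(2 * Real.pi)) := by
  simp only [gaussianPDFReal_def, hv, sub_zero]
  rw [Real.sqrt_mul (by positivity), Real.sqrt_sq hσ.le, mul_comm σ, inv_mul_eq_div]

/-- Remark 4.6: the sharper bound `Ĉ_{2,1}` on the local Lipschitz constant of the CDF
of the Gaussian measure with mean `0` and variance `σ²`: the density at `-β` is bounded
by `Ĉ` times the probability of failure `μ((-∞, -β])`. -/
theorem sharper_lipschitz_constant_bound (σ β : ℝ) (hσ : 0 < σ) (hβ : 0 < β) :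
    Real.exp (-β ^ 2 / (2 * σ ^ 2)) / (σ * Real.sqrt (2 * Real.pi)) ≤
      ((Real.sqrt (4 + β ^ 2 / σ ^ 2) + β / σ) / (Real.sqrt (2 + β ^ 2 / σ ^ 2) + β / σ)) *
        (β / σ ^ 2 +
          (β / Real.sqrt (2 + β ^ 2 / σ ^ 2) + σ) /
            (σ ^ 2 * Real.sqrt (2 + β ^ 2 / σ ^ 2) + β * σ)) *
        ((gaussianReal 0 ⟨σ ^ 2, sq_nonneg σ⟩) (Set.Iic (-β))).toReal := by
  set v : ℝ≥0 := ⟨σ ^ 2, sq_nonneg σ⟩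
  have hv : v ≠ 0 := NNReal.coe_ne_zero.mp (pow_ne_zero 2 hσ.ne')
  rw [← gaussianPDFReal_zero_of_coe_eq_sq hσ (v := v) rfl β, ← measureReal_def, ← cdf_eq_real]
  refine le_of_mul_le_mul_left ?_ (by positivity : (0 : ℝ) < 2 * σ ^ 2)
  calc 2 * σ ^ 2 * gaussianPDFReal 0 v β
      ≤ (β + √(β ^ 2 + 4 * σ ^ 2)) * cdf (gaussianReal 0 v) (-β) :=
        two_mul_gaussianPDFReal_le_mul_cdf_neg hv β
    _ ≤ _ := mul_le_mul_of_nonneg_right (add_sqrt_le_two_mul_sq_mul hσ hβ.le) (cdf_nonneg _ _)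
    _ = _ := by ring
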